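/- Let n ≥ 1, p > 1, a > 0, t ∈ ℝ, and let g_a(x) = e^{−a|x|²/2}. Set ζ = ζ(t) = (p−1)a/(1+(at)²) + a/(1+ita) = a(p − iat)/(1 + (at)²), which has positive real part. Then for every x ∈ ℝⁿ, 𝓕(|U(t)g_a|^{p−1} U(t)g_a)(x) = (1 + (at)²)^{−n(p−1)/4} (1 + ita)^{−n/2} ζ^{−n/2} e^{−|x|²/(2ζ)}, where the complex powers (1 + ita)^{−n/2} and ζ^{−n/2} are taken with the principal branch. -/

import Mathlib

open MeasureTheory Real Complex Filter
open scoped RealInnerProductSpace ENNReal Topology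

noncomputable section

/-- `ℝⁿ` as a Euclidean space. -/
abbrev Rn (n : ℕ) := EuclideanSpace ℝ (Fin n)

/-- The Fourier transform `𝓕 f (ξ) = (2π)^{-n/2} ∫ f(x) e^{-i x·ξ} dx`. -/
def FT (n : ℕ) (f : Rn n → ℂ) (ξ : Rn n) : ℂ :=
  (((2 * π) ^ (-(n : ℝ) / 2) : ℝ) : ℂ) *
    ∫ x : Rn n, f x * Complex.exp (-(Complex.I * ((⟪x, ξ⟫ : ℝ) : ℂ)))

/-- The inverse Fourier transform. -/
def FTinv (n : ℕ) (f : Rn n → ℂ) (x : Rn n) : ℂ :=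
  (((2 * π) ^ (-(n : ℝ) / 2) : ℝ) : ℂ) *
    ∫ ξ : Rn n, f ξ * Complex.exp (Complex.I * ((⟪x, ξ⟫ : ℝ) : ℂ))

/-- The free Schrödinger group `U(t) = e^{i(t/2)Δ}`, defined on the Fourier side by
`𝓕(U(t)f)(ξ) = e^{-i(t/2)|ξ|²} 𝓕f(ξ)`. -/
def Ugrp (n : ℕ) (t : ℝ) (f : Rn n → ℂ) : Rn n → ℂ :=
  FTinv n fun ξ => Complex.exp (-(Complex.I * ((t / 2 : ℝ) : ℂ) * ((‖ξ‖ ^ 2 : ℝ) : ℂ))) * FT n f ξ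

/-- The nonlinearity `f ↦ |f|^{p-1} f`. -/
def nlin (p : ℝ) {n : ℕ} (f : Rn n → ℂ) (x : Rn n) : ℂ :=
  ((‖f x‖ ^ (p - 1) : ℝ) : ℂ) * f x

/-- `δ(r) = n/2 - n/r`. -/
def sdelta (n : ℕ) (r : ℝ) : ℝ := n / 2 - n / r

/-- The integrand `e^{i(t/2)|ξ|²} 𝓕(|U(t)φ|^{p-1}U(t)φ)(ξ)`. -/
def lhsInt (n : ℕ) (p : ℝ) (φ : Rn n → ℂ) (t : ℝ) (ξ : Rn n) : ℂ :=
  Complex.exp (Complex.I * ((t / 2 : ℝ) : ℂ) * ((‖ξ‖ ^ 2 : ℝ) : ℂ)) *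
    FT n (nlin p (Ugrp n t φ)) ξ

/-- The integrand `|t|^{n(p-1)/2-2} U(t)(|U(-t)𝓕φ|^{p-1}U(-t)𝓕φ)(ξ)`. -/
def rhsInt (n : ℕ) (p : ℝ) (φ : Rn n → ℂ) (t : ℝ) (ξ : Rn n) : ℂ :=
  ((|t| ^ ((n : ℝ) * (p - 1) / 2 - 2) : ℝ) : ℂ) *
    Ugrp n t (nlin p (Ugrp n (-t) (FT n φ))) ξ

/-- The same integrand without the power of `t` (for `p = 1 + 4/n` the power vanishes). -/
def rhsInt0 (n : ℕ) (p : ℝ) (φ : Rn n → ℂ) (t : ℝ) (ξ : Rn n) : ℂ :=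
  Ugrp n t (nlin p (Ugrp n (-t) (FT n φ))) ξ

/-- The Gaussian `g_a(x) = e^{-a|x|²/2}`. -/
def gauss (n : ℕ) (a : ℝ) (x : Rn n) : ℂ :=
  Complex.exp (-((a * ‖x‖ ^ 2 / 2 : ℝ) : ℂ))

end

/-! Complex Gaussians `e^{-b|x|²/2}` with `Re b > 0` form a class closed under every operation
in the statement. Both `𝓕` and `𝓕⁻¹` send the parameter `b` to `b⁻¹` (with the factor `b^{-n/2}`),
the Schrödinger multiplier is itself the Gaussian with parameter `it`, and `|c g_w|^{p-1}` is the
real Gaussian with parameter `(p-1) Re w`. Hence `U(t)g_a = (1+ita)^{-n/2} g_w` with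
`w = a/(1+ita)`, the nonlinearity turns it into a multiple of `g_ζ` with `ζ = w + (p-1) Re w`,
and one last Gaussian Fourier transform gives the formula. -/

lemma Complex.ofReal_mul_cpow {r : ℝ} (hr : 0 < r) {z : ℂ} (hz : z ≠ 0) (s : ℂ) :
    ((r : ℂ) * z) ^ s = (r : ℂ) ^ s * z ^ s := by
  have hr' : (r : ℂ) ≠ 0 := ofReal_ne_zero.mpr hr.ne'
  rw [cpow_def_of_ne_zero (mul_ne_zero hr' hz), log_ofReal_mul hr hz, ofReal_log hr.le, add_mul,
    Complex.exp_add, ← cpow_def_of_ne_zero hr', ← cpow_def_of_ne_zero hz]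

noncomputable def cgauss (n : ℕ) (b : ℂ) (x : Rn n) : ℂ :=
  cexp (-(b / 2) * (‖x‖ : ℂ) ^ 2)

lemma gauss_eq_cgauss (n : ℕ) (a : ℝ) : gauss n a = cgauss n a := by
  ext x; rw [gauss, cgauss]; congr 1; push_cast; ring

lemma cgauss_mul_cgauss (n : ℕ) (b c : ℂ) (x : Rn n) :
    cgauss n b x * cgauss n c x = cgauss n (b + c) x := by
  rw [cgauss, cgauss, cgauss, ← Complex.exp_add]; congr 1; ring

lemma ofReal_norm_cgauss_rpow (n : ℕ) (b : ℂ) (q : ℝ) (x : Rn n) :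
    ((‖cgauss n b x‖ ^ q : ℝ) : ℂ) = cgauss n (q * b.re) x := by
  rw [cgauss, cgauss, Complex.norm_exp, ← Real.exp_mul, ofReal_exp]
  congr 1
  rw [← ofReal_pow, re_mul_ofReal, neg_re, div_ofNat_re]
  push_cast; ring

lemma integral_cgauss_mul_cexp_inner {n : ℕ} {b : ℂ} (hb : 0 < b.re) {c : ℂ} (hc : c ^ 2 = -1)
    (w : Rn n) :
    (((2 * π) ^ (-(n : ℝ) / 2) : ℝ) : ℂ) * ∫ v : Rn n, cgauss n b v * cexp (c * ⟪w, v⟫) =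
      b ^ (-(n : ℂ) / 2) * cgauss n b⁻¹ w := by
  have hconst : (((2 * π) ^ (-(n : ℝ) / 2) : ℝ) : ℂ) * (π / (b / 2)) ^ ((n : ℂ) / 2) =
      b ^ (-(n : ℂ) / 2) := by
    rw [show (π : ℂ) / (b / 2) = ((2 * π : ℝ) : ℂ) * b⁻¹ by push_cast; field_simp,
      Complex.ofReal_mul_cpow (by positivity) (inv_ne_zero (ne_zero_of_re_pos hb)),
      inv_cpow _ _ (slitPlane_arg_ne_pi (.inl hb)), ← cpow_neg, ← mul_assoc,
      ofReal_cpow (by positivity), ← cpow_add _ _ (by simp [pi_ne_zero])]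
    push_cast; ring_nf; simp
  simp_rw [cgauss, ← Complex.exp_add]
  rw [GaussianFourier.integral_cexp_neg_mul_sq_norm_add (by simpa using hb) c w,
    finrank_euclideanSpace, Fintype.card_fin, ← mul_assoc, hconst, hc]
  congr 2
  field_simp
  ring

lemma FT_const_mul (n : ℕ) (c : ℂ) (f : Rn n → ℂ) (ξ : Rn n) :
    FT n (fun x => c * f x) ξ = c * FT n f ξ := by
  simp only [FT, mul_assoc, integral_const_mul]; ring

lemma FTinv_const_mul (n : ℕ) (c : ℂ) (f : Rn n → ℂ) (x : Rn n) :
    FTinv n (fun ξ => c * f ξ) x = c * FTinv n f x := by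
  simp only [FTinv, mul_assoc, integral_const_mul]; ring

lemma FT_cgauss (n : ℕ) {b : ℂ} (hb : 0 < b.re) (ξ : Rn n) :
    FT n (cgauss n b) ξ = b ^ (-(n : ℂ) / 2) * cgauss n b⁻¹ ξ := by
  rw [FT, ← integral_cgauss_mul_cexp_inner hb (c := -I) (by simp) ξ]
  simp_rw [real_inner_comm ξ, neg_mul]

lemma FTinv_cgauss (n : ℕ) {b : ℂ} (hb : 0 < b.re) (x : Rn n) :
    FTinv n (cgauss n b) x = b ^ (-(n : ℂ) / 2) * cgauss n b⁻¹ x :=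
  integral_cgauss_mul_cexp_inner hb (c := I) (by simp) x

lemma Ugrp_cgauss (n : ℕ) (t : ℝ) {b : ℂ} (hb : 0 < b.re) (x : Rn n) :
    Ugrp n t (cgauss n b) x =
      b ^ (-(n : ℂ) / 2) * (b⁻¹ + I * t) ^ (-(n : ℂ) / 2) * cgauss n (b⁻¹ + I * t)⁻¹ x := by
  have hre : 0 < (b⁻¹ + I * t).re := by
    simpa [inv_re] using div_pos hb (normSq_pos.mpr (ne_zero_of_re_pos hb))
  have hmult :
      (fun ξ => cexp (-(I * ((t / 2 : ℝ) : ℂ) * ((‖ξ‖ ^ 2 : ℝ) : ℂ))) * FT n (cgauss n b) ξ) =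
        fun ξ => b ^ (-(n : ℂ) / 2) * cgauss n (b⁻¹ + I * t) ξ := by
    ext ξ
    have hphase :
        cexp (-(I * ((t / 2 : ℝ) : ℂ) * ((‖ξ‖ ^ 2 : ℝ) : ℂ))) = cgauss n (I * t) ξ := by
      rw [cgauss]; congr 1; push_cast; ring
    rw [FT_cgauss n hb, ← cgauss_mul_cgauss, hphase]
    ring
  rw [Ugrp, hmult, FTinv_const_mul, FTinv_cgauss n hre, mul_assoc]

lemma Ugrp_gauss (n : ℕ) (t : ℝ) {a : ℝ} (ha : 0 < a) (x : Rn n) :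
    Ugrp n t (gauss n a) x =
      (1 + I * t * a) ^ (-(n : ℂ) / 2) * cgauss n (a / (1 + I * t * a)) x := by
  have ha0 : (a : ℂ) ≠ 0 := ofReal_ne_zero.mpr ha.ne'
  have hfactor : (1 + I * t * a : ℂ) = a * ((a : ℂ)⁻¹ + I * t) := by field_simp
  rw [gauss_eq_cgauss, Ugrp_cgauss n t (by simpa using ha), hfactor,
    Complex.ofReal_mul_cpow ha (ne_zero_of_re_pos (by simpa using ha)), div_mul_cancel_left₀ ha0]

lemma nlin_const_mul_cgauss (n : ℕ) (p : ℝ) (c w : ℂ) :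
    nlin p (fun x => c * cgauss n w x) =
      fun x => ((‖c‖ ^ (p - 1) : ℝ) * c) * cgauss n (w + (p - 1) * w.re) x := by
  ext x
  rw [nlin, norm_mul, Real.mul_rpow (norm_nonneg _) (norm_nonneg _), ofReal_mul,
    ofReal_norm_cgauss_rpow, ← cgauss_mul_cgauss]
  push_cast
  ring

lemma norm_one_add_I_mul_cpow_rpow (n : ℕ) (t a q : ℝ) :
    ‖(1 + I * t * a) ^ (-(n : ℂ) / 2)‖ ^ q = (1 + (a * t) ^ 2) ^ (-((n : ℝ) * q / 4)) := by
  have hnorm : ‖1 + I * t * a‖ = √(1 + (a * t) ^ 2) := by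
    rw [show (1 + I * t * a : ℂ) = (1 : ℝ) + (a * t : ℝ) * I by push_cast; ring, norm_add_mul_I,
      one_pow]
  have hexp : (-(n : ℂ) / 2) = ((-(n : ℝ) / 2 : ℝ) : ℂ) := by push_cast; ring
  rw [hexp, norm_cpow_real, hnorm, sqrt_eq_rpow, ← rpow_mul (by positivity),
    ← rpow_mul (by positivity)]
  ring_nf

lemma div_one_add_I_mul_eq (a t : ℝ) :
    (a : ℂ) / (1 + I * t * a) = ((a / (1 + (a * t) ^ 2) : ℝ) : ℂ) * (1 - I * t * a) := by
  have h1 : (1 + I * t * a : ℂ) ≠ 0 := ne_zero_of_re_pos (by simp)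
  have h2 : ((1 + (a * t) ^ 2 : ℝ) : ℂ) ≠ 0 := ofReal_ne_zero.mpr (by positivity)
  rw [div_eq_iff h1, ofReal_div, div_mul_eq_mul_div, div_mul_eq_mul_div, eq_div_iff h2]
  push_cast
  linear_combination (a ^ 3 * t ^ 2 : ℂ) * I_sq

lemma re_div_one_add_I_mul (a t : ℝ) :
    ((a : ℂ) / (1 + I * t * a)).re = a / (1 + (a * t) ^ 2) := by
  rw [div_one_add_I_mul_eq, re_ofReal_mul]; simp

theorem gaussian_nonlinearity_fourier_general (n : ℕ) (p : ℝ) (hp : 1 < p)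
    (a : ℝ) (ha : 0 < a) (t : ℝ) (ζ : ℂ)
    (hζ : ζ = (a : ℂ) * ((p : ℂ) - Complex.I * (a : ℂ) * (t : ℂ)) /
      (1 + ((a : ℂ) * (t : ℂ)) ^ 2)) :
    ζ = (((p - 1) * a / (1 + (a * t) ^ 2) : ℝ) : ℂ) +
        (a : ℂ) / (1 + Complex.I * (t : ℂ) * (a : ℂ)) ∧
    0 < ζ.re ∧
    ∀ x : Rn n,
      FT n (nlin p (Ugrp n t (gauss n a))) x =
        (((1 + (a * t) ^ 2) ^ (-((n : ℝ) * (p - 1) / 4)) : ℝ) : ℂ) *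
          (1 + Complex.I * (t : ℂ) * (a : ℂ)) ^ (-(n : ℂ) / 2) *
          ζ ^ (-(n : ℂ) / 2) *
          Complex.exp (-(((‖x‖ ^ 2 : ℝ) : ℂ) / (2 * ζ))) := by
  obtain ⟨w, hw⟩ : ∃ w : ℂ, w = a / (1 + I * t * a) := ⟨_, rfl⟩
  have hw_re : w.re = a / (1 + (a * t) ^ 2) := hw ▸ re_div_one_add_I_mul a t
  have hζw : ζ = w + (p - 1) * w.re := by
    rw [hζ, hw_re, hw, div_one_add_I_mul_eq]; push_cast; field_simp; ring
  have hζ_re : 0 < ζ.re := by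
    have hw_pos : 0 < w.re := by rw [hw_re]; positivity
    rw [hζw, add_re, ← ofReal_one, ← ofReal_sub, ← ofReal_mul, ofReal_re]
    exact add_pos hw_pos (mul_pos (sub_pos.mpr hp) hw_pos)
  refine ⟨?_, hζ_re, fun x => ?_⟩
  · rw [hζw, hw_re, hw]; push_cast; ring
  have hU : Ugrp n t (gauss n a) = fun y => (1 + I * t * a) ^ (-(n : ℂ) / 2) * cgauss n w y :=
    funext fun y => hw ▸ Ugrp_gauss n t ha y
  rw [hU, nlin_const_mul_cgauss, ← hζw, FT_const_mul, FT_cgauss n hζ_re,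
    norm_one_add_I_mul_cpow_rpow]
  rw [cgauss, ← mul_assoc]
  congr 2
  push_cast; ring

/-- **Fourier transform of the Gaussian nonlinearity**: for `a > 0`, `p > 1`, with
`ζ = (p-1)a/(1+(at)²) + a/(1+ita) = a(p - iat)/(1+(at)²)` (which has positive real part),
one has `𝓕(|U(t)g_a|^{p-1}U(t)g_a)(x)
  = (1+(at)²)^{-n(p-1)/4} (1+ita)^{-n/2} ζ^{-n/2} e^{-|x|²/(2ζ)}` (principal branches). -/
theorem gaussian_nonlinearity_fourier (n : ℕ) (hn : 1 ≤ n) (p : ℝ) (hp : 1 < p)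
    (a : ℝ) (ha : 0 < a) (t : ℝ) (ζ : ℂ)
    (hζ : ζ = (a : ℂ) * ((p : ℂ) - Complex.I * (a : ℂ) * (t : ℂ)) /
      (1 + ((a : ℂ) * (t : ℂ)) ^ 2)) :
    ζ = (((p - 1) * a / (1 + (a * t) ^ 2) : ℝ) : ℂ) +
        (a : ℂ) / (1 + Complex.I * (t : ℂ) * (a : ℂ)) ∧
    0 < ζ.re ∧
    ∀ x : Rn n,
      FT n (nlin p (Ugrp n t (gauss n a))) x =
        (((1 + (a * t) ^ 2) ^ (-((n : ℝ) * (p - 1) / 4)) : ℝ) : ℂ) *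
          (1 + Complex.I * (t : ℂ) * (a : ℂ)) ^ (-(n : ℂ) / 2) *
          ζ ^ (-(n : ℂ) / 2) *
          Complex.exp (-(((‖x‖ ^ 2 : ℝ) : ℂ) / (2 * ζ))) :=
  gaussian_nonlinearity_fourier_general n p hp a ha t ζ hζ
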